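/- Let f be the martingale on a bounded Vilenkin group defined by f^{(A)} = Σ_{k : 2α_k < A} (1/α_k) a_k with a_k = (M_{2α_k}/M)(D_{M_{2α_k+1}} − D_{M_{2α_k}}), where {α_k} satisfies Σ_k α_k^{-1/2} < ∞. Then f belongs to the martingale Hardy space H_{1/2}(G_m). -/

import Mathlib

noncomputable section
open MeasureTheory Finset Filter
open scoped ENNReal NNReal

/-- M_0 = 1, M_{k+1} = m_k M_k, where the Vilenkin generating sequence is k ↦ m k + 2
(ensuring every term is at least 2). -/
def Mv (m : ℕ → ℕ) : ℕ → ℕ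
  | 0 => 1
  | k + 1 => (m k + 2) * Mv m k

/-- k-th digit of n in the generalized number system. -/
def digit (m : ℕ → ℕ) (n k : ℕ) : ℕ := (n / Mv m k) % (m k + 2)

/-- The Vilenkin group: complete direct product of the cyclic groups Z_{m_k + 2}. -/
abbrev GV (m : ℕ → ℕ) : Type := ∀ k : ℕ, ZMod (m k + 2)

instance (n : ℕ) : TopologicalSpace (ZMod (n + 2)) := ⊥
instance (n : ℕ) : DiscreteTopology (ZMod (n + 2)) := ⟨rfl⟩

instance (n : ℕ) : MeasurableSpace (ZMod (n + 2)) := ⊤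
instance (n : ℕ) : BorelSpace (ZMod (n + 2)) := ⟨(borel_eq_top_of_discrete).symm⟩

/-- The normalized Haar measure on the Vilenkin group. -/
def haarG (m : ℕ → ℕ) : Measure (GV m) :=
  Measure.addHaarMeasure (⊤ : TopologicalSpace.PositiveCompacts (GV m))

/-- Generalized Rademacher function r_k(x) = exp(2πi x_k / m_k). -/
def rad (m : ℕ → ℕ) (k : ℕ) (x : GV m) : ℂ :=
  Complex.exp (2 * Real.pi * Complex.I * ((x k).val : ℂ) / ((m k + 2 : ℕ) : ℂ))

/-- Vilenkin character ψ_n(x) = ∏_k r_k(x)^{n_k}. -/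
def vilenkin (m : ℕ → ℕ) (n : ℕ) (x : GV m) : ℂ :=
  ∏ k ∈ Finset.range n, rad m k x ^ digit m n k

/-- Dirichlet kernel D_n = ∑_{k<n} ψ_k. -/
def DK (m : ℕ → ℕ) (n : ℕ) (x : GV m) : ℂ :=
  ∑ k ∈ Finset.range n, vilenkin m k x

/-- Fejér kernel K_n = (1/n) ∑_{j=1}^n D_j. -/
def FK (m : ℕ → ℕ) (n : ℕ) (x : GV m) : ℂ :=
  (n : ℂ)⁻¹ * ∑ j ∈ Finset.range n, DK m (j + 1) x

/-- The interval I_n = {x : x_0 = ⋯ = x_{n-1} = 0}. -/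
def Iset (m : ℕ → ℕ) (n : ℕ) : Set (GV m) := {x | ∀ k < n, x k = 0}

/-- q_A = M_{2A} + M_{2A-2} + ⋯ + M_2 + M_0. -/
def qA (m : ℕ → ℕ) (A : ℕ) : ℕ := ∑ j ∈ Finset.range (A + 1), Mv m (2 * j)

/-- Fourier coefficient with respect to the Vilenkin system. -/
def fhat (m : ℕ → ℕ) (f : GV m → ℂ) (k : ℕ) : ℂ :=
  ∫ x, f x * (starRingEnd ℂ) (vilenkin m k x) ∂ haarG m

/-- Partial sums from a given sequence of Fourier coefficients. -/
def Sc (m : ℕ → ℕ) (c : ℕ → ℂ) (n : ℕ) (x : GV m) : ℂ :=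
  ∑ v ∈ Finset.range n, c v * vilenkin m v x

/-- Fejér means from a given sequence of Fourier coefficients. -/
def σc (m : ℕ → ℕ) (c : ℕ → ℂ) (n : ℕ) (x : GV m) : ℂ :=
  (n : ℂ)⁻¹ * ∑ k ∈ Finset.range n, Sc m c k x

/-- Partial sum operator S_n f for integrable f. -/
def Spart (m : ℕ → ℕ) (f : GV m → ℂ) (n : ℕ) (x : GV m) : ℂ :=
  Sc m (fhat m f) n x

/-- The filtration generated by the intervals I_n(x), i.e. by the first n coordinates. -/
def filtrationG (m : ℕ → ℕ) : Filtration ℕ (inferInstance : MeasurableSpace (GV m)) where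
  seq n := MeasurableSpace.comap (fun x (k : Fin n) => x k) inferInstance
  mono' := by
    intro a b hab
    show MeasurableSpace.comap (fun (x : GV m) (k : Fin a) => x k) inferInstance ≤
      MeasurableSpace.comap (fun (x : GV m) (k : Fin b) => x k) inferInstance
    have : (fun (x : GV m) (k : Fin a) => x k) =
        (fun (y : ∀ k : Fin b, ZMod (m k + 2)) (k : Fin a) => y (Fin.castLE hab k)) ∘
          (fun x (k : Fin b) => x k) := rfl
    rw [this, ← MeasurableSpace.comap_comp]
    exact MeasurableSpace.comap_mono
      ((measurable_pi_lambda _ fun k => measurable_pi_apply _).comap_le)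
  le' := fun n => (measurable_pi_lambda _ fun k => measurable_pi_apply _).comap_le


/-- The atom a = (M_{2β}/M)(D_{M_{2β+1}} - D_{M_{2β}}). -/
def aAtom (m : ℕ → ℕ) (M : ℕ) (β : ℕ) (x : GV m) : ℂ :=
  ((Mv m (2 * β) : ℂ) / (M : ℂ)) * (DK m (Mv m (2 * β + 1)) x - DK m (Mv m (2 * β)) x)

/-- The martingale f^{(A)} = ∑_{k : 2α_k < A} (1/α_k) a_k. -/
def fSeq (m : ℕ → ℕ) (M : ℕ) (α : ℕ → ℕ) (A : ℕ) (x : GV m) : ℂ :=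
  ∑ k ∈ (Finset.range A).filter (fun k => 2 * α k < A), ((α k : ℂ))⁻¹ * aAtom m M (α k) x

/-!
Paley's lemma `D_{M_n} = M_n 𝟙_{I_n}` turns `a_β` into
`(M_{2β}/M)(M_{2β+1} 𝟙_{I_{2β+1}} - M_{2β} 𝟙_{I_{2β}})`. Hence `a_β` is supported in `I_{2β}`,
bounded by `M_{2β}² = μ(I_{2β})⁻²`, and has integral zero over every set determined by the first
`2β` coordinates, which is the martingale property. Every `f^{(A)}` is a partial sum of
`∑ α_k⁻¹ a_{α_k}`, so `f* ≤ ∑ α_k⁻¹ |a_{α_k}|`, and the `1/2`-triangle inequality gives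
`∫ (f*)^{1/2} ≤ ∑ α_k^{-1/2} ∫ |a_{α_k}|^{1/2} ≤ ∑ α_k^{-1/2} < ∞`.
-/

lemma ENNReal.rpow_sum_le_sum_rpow {ι : Type*} (s : Finset ι) (f : ι → ℝ≥0∞) {p : ℝ}
    (hp0 : 0 < p) (hp1 : p ≤ 1) : (∑ i ∈ s, f i) ^ p ≤ ∑ i ∈ s, f i ^ p := by
  classical
  induction s using Finset.induction with
  | empty => simp [ENNReal.zero_rpow_of_pos hp0]
  | insert j s hj ih =>
    rw [sum_insert hj, sum_insert hj]
    exact (ENNReal.rpow_add_le_add_rpow _ _ hp0.le hp1).trans (add_le_add le_rfl ih)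

lemma ENNReal.rpow_tsum_le_tsum_rpow {ι : Type*} (f : ι → ℝ≥0∞) {p : ℝ} (hp0 : 0 < p)
    (hp1 : p ≤ 1) : (∑' i, f i) ^ p ≤ ∑' i, f i ^ p := by
  rw [← ENNReal.le_rpow_inv_iff hp0, ENNReal.tsum_eq_iSup_sum]
  refine iSup_le fun s => (ENNReal.le_rpow_inv_iff hp0).mpr ?_
  exact (ENNReal.rpow_sum_le_sum_rpow s f hp0 hp1).trans (ENNReal.sum_le_tsum s)

lemma lintegral_iSup_enorm_sum_rpow_le {X E ι κ : Type*} [MeasurableSpace X] {μ : Measure X}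
    [TopologicalSpace E] [ESeminormedAddCommMonoid E] [Countable κ] {p : ℝ} (hp0 : 0 < p)
    (hp1 : p ≤ 1) {f : κ → X → E} (hf : ∀ k, AEMeasurable (fun x => ‖f k x‖ₑ ^ p) μ)
    (s : ι → Finset κ) :
    ∫⁻ x, (⨆ i, ‖∑ k ∈ s i, f k x‖ₑ) ^ p ∂μ ≤ ∑' k, ∫⁻ x, ‖f k x‖ₑ ^ p ∂μ :=
  calc ∫⁻ x, (⨆ i, ‖∑ k ∈ s i, f k x‖ₑ) ^ p ∂μ
      ≤ ∫⁻ x, (∑' k, ‖f k x‖ₑ) ^ p ∂μ := by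
        refine lintegral_mono fun x => ENNReal.rpow_le_rpow (iSup_le fun i => ?_) hp0.le
        exact (enorm_sum_le _ _).trans (ENNReal.sum_le_tsum _)
    _ ≤ ∫⁻ x, ∑' k, ‖f k x‖ₑ ^ p ∂μ :=
        lintegral_mono fun x => ENNReal.rpow_tsum_le_tsum_rpow _ hp0 hp1
    _ = ∑' k, ∫⁻ x, ‖f k x‖ₑ ^ p ∂μ := lintegral_tsum hf

lemma enorm_natCast_inv_rpow (n : ℕ) {p : ℝ} (hp : 0 ≤ p) :
    ‖((n : ℂ))⁻¹‖ₑ ^ p = ENNReal.ofReal ((n : ℝ) ^ (-p)) := by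
  rw [← ofReal_norm, norm_inv, Complex.norm_natCast,
    ENNReal.ofReal_rpow_of_nonneg (by positivity) hp,
    Real.inv_rpow (Nat.cast_nonneg _), Real.rpow_neg (Nat.cast_nonneg _)]

section
variable {m : ℕ → ℕ}

lemma Mv_succ (m : ℕ → ℕ) (k : ℕ) : Mv m (k + 1) = (m k + 2) * Mv m k := rfl

lemma Mv_eq_prod (m : ℕ → ℕ) (n : ℕ) : Mv m n = ∏ k ∈ range n, (m k + 2) := by
  induction n with
  | zero => rfl
  | succ n ih => rw [Mv_succ, prod_range_succ, ih, mul_comm]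

lemma Mv_pos (m : ℕ → ℕ) (n : ℕ) : 0 < Mv m n := by
  rw [Mv_eq_prod]
  exact prod_pos fun k _ => by omega

lemma Mv_dvd_Mv {k n : ℕ} (h : k ≤ n) : Mv m k ∣ Mv m n := by
  rw [Mv_eq_prod, Mv_eq_prod]
  exact prod_dvd_prod_of_subset _ _ _ (range_subset_range.mpr h)

lemma Mv_mono : Monotone (Mv m) := fun _ n h => Nat.le_of_dvd (Mv_pos m n) (Mv_dvd_Mv h)

lemma lt_Mv (m : ℕ → ℕ) (k : ℕ) : k < Mv m k := by
  induction k with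
  | zero => exact Mv_pos m 0
  | succ k ih => rw [Mv_succ]; nlinarith

lemma digit_eq_zero_of_lt {v k : ℕ} (h : v < Mv m k) : digit m v k = 0 := by
  simp [digit, Nat.div_eq_of_lt h]

lemma digit_eq_mod_div (v k : ℕ) : digit m v k = v % Mv m (k + 1) / Mv m k := by
  rw [Mv_succ, mul_comm, Nat.mod_mul_right_div_self]; rfl

lemma digit_mul_Mv_add_of_lt {j u n k : ℕ} (hk : k < n) :
    digit m (j * Mv m n + u) k = digit m u k := by
  obtain ⟨c, hc⟩ := Mv_dvd_Mv (m := m) (Nat.succ_le_of_lt hk)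
  rw [digit_eq_mod_div, digit_eq_mod_div, hc,
    show j * (Mv m (k + 1) * c) + u = u + j * c * Mv m (k + 1) by ring, Nat.add_mul_mod_self_right]

lemma digit_mul_Mv_add_self {j u n : ℕ} (hu : u < Mv m n) (hj : j < m n + 2) :
    digit m (j * Mv m n + u) n = j := by
  rw [digit, add_comm, Nat.add_mul_div_right _ _ (Mv_pos m n), Nat.div_eq_of_lt hu, zero_add,
    Nat.mod_eq_of_lt hj]

lemma vilenkin_eq_prod_range {v N : ℕ} (hv : v < Mv m N) (x : GV m) :
    vilenkin m v x = ∏ k ∈ range N, rad m k x ^ digit m v k := by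
  have hvanish : ∀ k, v ≤ k ∨ N ≤ k → rad m k x ^ digit m v k = 1 := by
    intro k hk
    rw [digit_eq_zero_of_lt, pow_zero]
    rcases hk with hk | hk
    · exact hk.trans_lt (lt_Mv m k)
    · exact hv.trans_le (Mv_mono hk)
  rw [vilenkin]
  rcases le_total v N with h | h
  · exact prod_subset (range_subset_range.mpr h) fun k _ hk => hvanish k (by simp_all)
  · exact (prod_subset (range_subset_range.mpr h) fun k _ hk => hvanish k (by simp_all)).symm

lemma vilenkin_mul_Mv_add {j u n : ℕ} (hu : u < Mv m n) (hj : j < m n + 2) (x : GV m) :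
    vilenkin m (j * Mv m n + u) x = vilenkin m u x * rad m n x ^ j := by
  have hlt : j * Mv m n + u < Mv m (n + 1) := by rw [Mv_succ]; nlinarith
  rw [vilenkin_eq_prod_range hlt, vilenkin_eq_prod_range hu, prod_range_succ,
    digit_mul_Mv_add_self hu hj]
  congr 1
  exact prod_congr rfl fun k hk => by rw [digit_mul_Mv_add_of_lt (mem_range.mp hk)]

lemma sum_range_mul_eq_sum_sum {R : Type*} [AddCommMonoid R] (a b : ℕ) (f : ℕ → R) :
    ∑ i ∈ range (a * b), f i = ∑ j ∈ range a, ∑ u ∈ range b, f (j * b + u) := by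
  induction a with
  | zero => simp
  | succ a ih => rw [Nat.succ_mul, sum_range_add, ih, sum_range_succ]

lemma DK_Mv_succ (n : ℕ) (x : GV m) :
    DK m (Mv m (n + 1)) x = DK m (Mv m n) x * ∑ j ∈ range (m n + 2), rad m n x ^ j := by
  rw [DK, Mv_succ, sum_range_mul_eq_sum_sum, DK, sum_mul_sum, sum_comm]
  refine sum_congr rfl fun u hu => sum_congr rfl fun j hj => ?_
  exact vilenkin_mul_Mv_add (mem_range.mp hu) (mem_range.mp hj) x

lemma rad_eq_pow (k : ℕ) (x : GV m) :
    rad m k x = Complex.exp (2 * Real.pi * Complex.I / (m k + 2 : ℕ)) ^ (x k).val := by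
  rw [rad, ← Complex.exp_nat_mul]
  ring_nf

lemma geom_sum_rad (k : ℕ) (x : GV m) :
    ∑ j ∈ range (m k + 2), rad m k x ^ j = if x k = 0 then (m k + 2 : ℕ) else 0 := by
  have hζ := Complex.isPrimitiveRoot_exp (m k + 2) (by omega)
  split_ifs with hx
  · simp [rad_eq_pow, hx]
  · have hpow : rad m k x ^ (m k + 2) = 1 := by
      rw [rad_eq_pow, pow_right_comm, hζ.pow_eq_one, one_pow]
    have hne : rad m k x ≠ 1 := by
      rw [rad_eq_pow, Ne, hζ.pow_eq_one_iff_dvd]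
      exact fun hdvd => hx ((ZMod.val_eq_zero _).mp (Nat.eq_zero_of_dvd_of_lt hdvd (ZMod.val_lt _)))
    rw [geom_sum_eq hne, hpow, sub_self, zero_div, Nat.cast_zero]


lemma Iset_succ (n : ℕ) : Iset m (n + 1) = Iset m n ∩ {x | x n = 0} := by
  ext x
  simp only [Iset, Set.mem_ofPred_eq, Set.mem_inter_iff, Nat.forall_lt_succ_right]

/-- Paley's lemma. -/
lemma DK_Mv (n : ℕ) : DK m (Mv m n) = (Iset m n).indicator fun _ => (Mv m n : ℂ) := by
  funext x
  induction n with
  | zero => simp [DK, Mv, vilenkin, Iset]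
  | succ n ih =>
    rw [DK_Mv_succ, ih, geom_sum_rad]
    by_cases hI : x ∈ Iset m n <;> by_cases hx : x n = 0 <;>
      simp [hI, hx, Iset_succ, Mv_succ, mul_comm]

def IsetAddSubgroup (m : ℕ → ℕ) (n : ℕ) : AddSubgroup (GV m) :=
  (AddMonoidHom.pi fun k : Fin n => Pi.evalAddMonoidHom (fun k => ZMod (m k + 2)) k).ker

lemma coe_IsetAddSubgroup (n : ℕ) : (IsetAddSubgroup m n : Set (GV m)) = Iset m n := by
  ext x
  simp [IsetAddSubgroup, Iset, funext_iff, Fin.forall_iff]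

lemma index_IsetAddSubgroup (n : ℕ) : (IsetAddSubgroup m n).index = Mv m n := by
  rw [IsetAddSubgroup, AddSubgroup.index_ker, AddMonoidHom.range_eq_top.mpr, AddSubgroup.card_top,
    Nat.card_pi, Mv_eq_prod, ← Fin.prod_univ_eq_prod_range]
  · simp
  · exact fun y => ⟨fun k => if h : k < n then y ⟨k, h⟩ else 0, by ext k; simp⟩

instance (n : ℕ) : (IsetAddSubgroup m n).FiniteIndex :=
  ⟨by rw [index_IsetAddSubgroup]; exact (Mv_pos m n).ne'⟩

instance : IsProbabilityMeasure (haarG m) :=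
  ⟨Measure.addHaarMeasure_self⟩

instance : (haarG m).IsAddLeftInvariant := by
  unfold haarG; infer_instance

lemma measurableSet_Iset_filtrationG {n A : ℕ} (h : n ≤ A) :
    MeasurableSet[filtrationG m A] (Iset m n) := by
  refine ⟨{y | ∀ k : Fin A, (k : ℕ) < n → y k = 0},
    DiscreteMeasurableSpace.forall_measurableSet _, ?_⟩
  ext x
  exact ⟨fun hx k hk => hx ⟨k, hk.trans_le h⟩ hk, fun hx k => hx k⟩

lemma measurableSet_Iset (n : ℕ) : MeasurableSet (Iset m n) :=
  (filtrationG m).le n _ (measurableSet_Iset_filtrationG le_rfl)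

lemma haarG_Iset (n : ℕ) : haarG m (Iset m n) = (Mv m n : ℝ≥0∞)⁻¹ := by
  have h := (IsetAddSubgroup m n).index_mul_measure
    (by rw [coe_IsetAddSubgroup]; exact measurableSet_Iset n) (haarG m)
  rw [coe_IsetAddSubgroup, index_IsetAddSubgroup, measure_univ, mul_comm] at h
  exact ENNReal.eq_inv_of_mul_eq_one_left h

lemma mem_iff_zero_mem_of_mem_Iset {A n : ℕ} (hn : A ≤ n) {s : Set (GV m)}
    (hs : MeasurableSet[filtrationG m A] s) {x : GV m} (hx : x ∈ Iset m n) :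
    x ∈ s ↔ (0 : GV m) ∈ s := by
  obtain ⟨T, -, rfl⟩ := hs
  have hfirst : (fun k : Fin A => x k) = fun k : Fin A => (0 : GV m) k :=
    funext fun k => hx k (k.isLt.trans_le hn)
  simp only [Set.mem_preimage, hfirst]

lemma setIntegral_DK_Mv {A n : ℕ} (hn : A ≤ n) {s : Set (GV m)}
    (hs : MeasurableSet[filtrationG m A] s) :
    ∫ x in s, DK m (Mv m n) x ∂haarG m = s.indicator (fun _ => 1) 0 := by
  rw [DK_Mv, setIntegral_indicator (measurableSet_Iset n), setIntegral_const, measureReal_def]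
  by_cases h0 : (0 : GV m) ∈ s
  · have hinter : s ∩ Iset m n = Iset m n :=
      Set.inter_eq_right.mpr fun x hx => (mem_iff_zero_mem_of_mem_Iset hn hs hx).mpr h0
    rw [hinter, Set.indicator_of_mem h0, haarG_Iset, ENNReal.toReal_inv, ENNReal.toReal_natCast,
      Complex.real_smul]
    push_cast
    exact inv_mul_cancel₀ (by exact_mod_cast (Mv_pos m n).ne')
  · have hinter : s ∩ Iset m n = ∅ :=
      Set.eq_empty_of_forall_notMem fun x hx =>
        h0 ((mem_iff_zero_mem_of_mem_Iset hn hs hx.2).mp hx.1)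
    simp [hinter, h0]


lemma stronglyMeasurable_DK_Mv {n A : ℕ} (h : n ≤ A) :
    StronglyMeasurable[filtrationG m A] (DK m (Mv m n)) := by
  rw [DK_Mv]
  exact stronglyMeasurable_const.indicator (measurableSet_Iset_filtrationG h)

lemma integrable_DK_Mv (n : ℕ) : Integrable (DK m (Mv m n)) (haarG m) := by
  rw [DK_Mv]
  exact (integrable_const _).indicator (measurableSet_Iset n)

lemma stronglyMeasurable_aAtom {M β A : ℕ} (h : 2 * β + 1 ≤ A) :
    StronglyMeasurable[filtrationG m A] (aAtom m M β) :=
  stronglyMeasurable_const.mul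
    ((stronglyMeasurable_DK_Mv h).sub (stronglyMeasurable_DK_Mv (by omega)))

lemma integrable_aAtom (M β : ℕ) : Integrable (aAtom m M β) (haarG m) :=
  ((integrable_DK_Mv _).sub (integrable_DK_Mv _)).const_mul _

lemma setIntegral_aAtom_eq_zero {M A β : ℕ} (h : A ≤ 2 * β) {s : Set (GV m)}
    (hs : MeasurableSet[filtrationG m A] s) : ∫ x in s, aAtom m M β x ∂haarG m = 0 := by
  simp only [aAtom]
  rw [integral_const_mul, integral_sub (integrable_DK_Mv _).integrableOn
    (integrable_DK_Mv _).integrableOn, setIntegral_DK_Mv (by omega) hs, setIntegral_DK_Mv h hs,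
    sub_self, mul_zero]

/-- `a_β` is a `1/2`-atom, as `M_{2β}² = μ(I_{2β})⁻²`. -/
lemma norm_aAtom_le {M : ℕ} (hM : ∀ k, m k + 2 ≤ M) (β : ℕ) (x : GV m) :
    ‖aAtom m M β x‖ ≤ (Iset m (2 * β)).indicator (fun _ => (Mv m (2 * β) : ℝ) ^ 2) x := by
  set c := Mv m (2 * β)
  have hc : (0 : ℝ) < c := by exact_mod_cast Mv_pos m (2 * β)
  have hM1 : (1 : ℝ) ≤ M := by exact_mod_cast (show 1 ≤ M by linarith [hM 0])
  have hcC : c ≤ Mv m (2 * β + 1) := Mv_mono (Nat.le_succ _)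
  have hCM : (Mv m (2 * β + 1) : ℝ) ≤ M * c := by
    rw [Mv_succ]; push_cast; gcongr; exact_mod_cast hM _
  simp only [aAtom, DK_Mv]
  by_cases h1 : x ∈ Iset m (2 * β + 1)
  · have h0 : x ∈ Iset m (2 * β) := by rw [Iset_succ] at h1; exact h1.1
    rw [Set.indicator_of_mem h1, Set.indicator_of_mem h0, Set.indicator_of_mem h0,
      ← Nat.cast_sub hcC, norm_mul, norm_div, Complex.norm_natCast, Complex.norm_natCast,
      Complex.norm_natCast, Nat.cast_sub hcC, div_mul_eq_mul_div, div_le_iff₀ (by linarith)]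
    nlinarith
  · rw [Set.indicator_of_notMem h1, zero_sub]
    by_cases h0 : x ∈ Iset m (2 * β)
    · rw [Set.indicator_of_mem h0, Set.indicator_of_mem h0, norm_mul, norm_neg, norm_div,
        Complex.norm_natCast, Complex.norm_natCast, div_mul_eq_mul_div, div_le_iff₀ (by linarith)]
      nlinarith
    · simp [h0]

lemma lintegral_enorm_aAtom_rpow_le_one {M : ℕ} (hM : ∀ k, m k + 2 ≤ M) (β : ℕ) :
    ∫⁻ x, ‖aAtom m M β x‖ₑ ^ (2⁻¹ : ℝ) ∂haarG m ≤ 1 := by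
  set c := Mv m (2 * β)
  have hpt : ∀ x, ‖aAtom m M β x‖ₑ ^ (2⁻¹ : ℝ) ≤
      (Iset m (2 * β)).indicator (fun _ => (c : ℝ≥0∞)) x := by
    intro x
    have h := norm_aAtom_le hM β x
    by_cases hx : x ∈ Iset m (2 * β)
    · rw [Set.indicator_of_mem hx] at h ⊢
      calc ‖aAtom m M β x‖ₑ ^ (2⁻¹ : ℝ) ≤ ENNReal.ofReal ((c : ℝ) ^ 2) ^ (2⁻¹ : ℝ) := by
            rw [← ofReal_norm]; gcongr
        _ = c := by
          rw [ENNReal.ofReal_pow (Nat.cast_nonneg _), ENNReal.ofReal_natCast,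
            show (2⁻¹ : ℝ) = ((2 : ℕ) : ℝ)⁻¹ by norm_num, ENNReal.pow_rpow_inv_natCast two_ne_zero]
    · rw [Set.indicator_of_notMem hx] at h ⊢
      simp [norm_le_zero_iff.mp h]
  calc ∫⁻ x, ‖aAtom m M β x‖ₑ ^ (2⁻¹ : ℝ) ∂haarG m
      ≤ ∫⁻ x, (Iset m (2 * β)).indicator (fun _ => (c : ℝ≥0∞)) x ∂haarG m := lintegral_mono hpt
    _ = 1 := by
      rw [lintegral_indicator_const (measurableSet_Iset _), haarG_Iset,
        ENNReal.mul_inv_cancel (by exact_mod_cast (Mv_pos m _).ne') (ENNReal.natCast_ne_top _)]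

lemma stronglyMeasurable_fSeq (M : ℕ) (α : ℕ → ℕ) (A : ℕ) :
    StronglyMeasurable[filtrationG m A] (fSeq m M α A) := by
  refine Finset.stronglyMeasurable_fun_sum _ fun k hk => (stronglyMeasurable_aAtom ?_).const_mul _
  have := (mem_filter.mp hk).2
  omega

lemma integrable_fSeq (M : ℕ) (α : ℕ → ℕ) (A : ℕ) : Integrable (fSeq m M α A) (haarG m) :=
  integrable_finsetSum _ fun k _ => (integrable_aAtom M (α k)).const_mul _

lemma setIntegral_fSeq_eq {M : ℕ} {α : ℕ → ℕ} (hα : StrictMono α) {A B : ℕ} (hAB : A ≤ B)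
    {s : Set (GV m)} (hs : MeasurableSet[filtrationG m A] s) :
    ∫ x in s, fSeq m M α B x ∂haarG m = ∫ x in s, fSeq m M α A x ∂haarG m := by
  have hsum : ∀ C, ∫ x in s, fSeq m M α C x ∂haarG m = ∑ k ∈ (range C).filter (2 * α · < C),
      ∫ x in s, (α k : ℂ)⁻¹ * aAtom m M (α k) x ∂haarG m := fun C =>
    integral_finsetSum _ fun k _ => ((integrable_aAtom M (α k)).const_mul _).integrableOn
  rw [hsum, hsum]
  refine (sum_subset (fun k hk => ?_) fun k hkB hkA => ?_).symm
  · simp only [mem_filter, mem_range] at hk ⊢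
    omega
  · -- the atoms added between `A` and `B` live at levels `2 α k ≥ A`
    have hk : k ≤ α k := hα.id_le k
    simp only [mem_filter, mem_range, not_and, not_lt] at hkB hkA
    rw [integral_const_mul, setIntegral_aAtom_eq_zero (by omega) hs, mul_zero]

lemma martingale_fSeq (M : ℕ) {α : ℕ → ℕ} (hα : StrictMono α) :
    Martingale (fSeq m M α) (filtrationG m) (haarG m) :=
  martingale_of_setIntegral_eq_succ (stronglyMeasurable_fSeq M α) (integrable_fSeq M α)
    fun A _ hs => (setIntegral_fSeq_eq hα A.le_succ hs).symm

lemma lintegral_enorm_mul_aAtom_rpow_le {M : ℕ} (hM : ∀ k, m k + 2 ≤ M) (β : ℕ) (c : ℂ) :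
    ∫⁻ x, ‖c * aAtom m M β x‖ₑ ^ (2⁻¹ : ℝ) ∂haarG m ≤ ‖c‖ₑ ^ (2⁻¹ : ℝ) := by
  simp only [enorm_mul, ENNReal.mul_rpow_of_nonneg _ _ (by norm_num : (0 : ℝ) ≤ 2⁻¹)]
  rw [lintegral_const_mul' _ _ (by simp)]
  exact mul_le_of_le_one_right' (lintegral_enorm_aAtom_rpow_le_one hM β)

end

theorem f_mem_Hardy_half_general (m : ℕ → ℕ) (M : ℕ) (α : ℕ → ℕ)
    (hα : StrictMono α)
    (hM : ∀ k, m k + 2 ≤ M)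
    (h2 : Summable fun k => ((α k : ℝ)) ^ (-(2 : ℝ)⁻¹)) :
    MeasureTheory.Martingale (fSeq m M α) (filtrationG m) (haarG m) ∧
    (∫⁻ x, (⨆ A, (‖fSeq m M α A x‖₊ : ℝ≥0∞)) ^ ((2 : ℝ)⁻¹) ∂ haarG m) < ⊤ := by
  refine ⟨martingale_fSeq M hα, ?_⟩
  have hmeas : ∀ k, AEMeasurable (fun x => ‖(α k : ℂ)⁻¹ * aAtom m M (α k) x‖ₑ ^ (2⁻¹ : ℝ))
      (haarG m) := fun k =>
    ((integrable_aAtom M (α k)).const_mul _).aestronglyMeasurable.enorm.pow_const _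
  calc ∫⁻ x, (⨆ A, ‖fSeq m M α A x‖ₑ) ^ (2⁻¹ : ℝ) ∂haarG m
      ≤ ∑' k, ∫⁻ x, ‖(α k : ℂ)⁻¹ * aAtom m M (α k) x‖ₑ ^ (2⁻¹ : ℝ) ∂haarG m :=
        lintegral_iSup_enorm_sum_rpow_le (by norm_num) (by norm_num) hmeas _
    _ ≤ ∑' k, ENNReal.ofReal ((α k : ℝ) ^ (-(2 : ℝ)⁻¹)) := ENNReal.tsum_le_tsum fun k =>
        (lintegral_enorm_mul_aAtom_rpow_le hM _ _).trans_eq (enorm_natCast_inv_rpow _ (by norm_num))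
    _ = ENNReal.ofReal (∑' k, (α k : ℝ) ^ (-(2 : ℝ)⁻¹)) :=
        (ENNReal.ofReal_tsum_of_nonneg (fun k => by positivity) h2).symm
    _ < ⊤ := ENNReal.ofReal_lt_top

/-- The constructed f = (f^{(A)}) is a martingale belonging to the Hardy space H_{1/2}:
the maximal function f* = sup_A |f^{(A)}| satisfies ∫ (f*)^{1/2} dμ < ∞. -/
theorem f_mem_Hardy_half (m : ℕ → ℕ) (M : ℕ) (α : ℕ → ℕ)
    (hα : StrictMono α) (hα0 : 0 < α 0)
    (hM : ∀ k, m k + 2 ≤ M) (hM' : ∃ k, m k + 2 = M)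
    (h2 : Summable fun k => ((α k : ℝ)) ^ (-(2 : ℝ)⁻¹)) :
    MeasureTheory.Martingale (fSeq m M α) (filtrationG m) (haarG m) ∧
    (∫⁻ x, (⨆ A, (‖fSeq m M α A x‖₊ : ℝ≥0∞)) ^ ((2 : ℝ)⁻¹) ∂ haarG m) < ⊤ :=
  f_mem_Hardy_half_general m M α hα hM h2

end
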